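/- arXiv:1107.1536 — 3 statements merged into one kernel-verified Lean document; each statement's English description precedes it below -/
import Mathlib

section
/- There exist constants C > 0 and λ₀ > 0 such that for all real λ ≥ λ₀ and all natural numbers l with l ≤ λ − √λ, D_λ(l) ≥ (1 − C/λ)/(1 − l/λ) − (1 + C/λ)/(λ·(1 − l/λ)³). -/
/-!
With `r = l / λ`, the `k`-th term of `D_λ(l)` is `l^{\underline k} / λ^k`, and the Weierstrass
product inequality `l^{\underline k} ≥ l^k (1 - C(k,2) / l)` bounds it below by
`r^k - C(k,2) r^k / l`. Summing, `D_λ(l)` is at least the geometric sum `(1 - r^{l+1}) / (1 - r)`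
minus `(1 / l) ∑ C(k,2) r^k ≤ r² / (l (1 - r)³) ≤ 1 / (λ (1 - r)³)`.
The tail `r^{l+1} = l r^l / λ` is at most `2 / λ`: comparing with `∑ k r^k = r / (1 - r)²`
gives `l (l + 1) r^l (1 - r)² ≤ 2 r`, and `l ≤ λ - √λ` gives `r ≤ l (1 - r)²`.
So `C = 2` and any `λ₀ > 0` work.
-/

/-- `D lam l = ∑_{k=0}^{l} l! / ((l-k)! * lam^k)`. -/
noncomputable def D (lam : ℝ) (l : ℕ) : ℝ :=
  ∑ k ∈ Finset.range (l + 1),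
    (Nat.factorial l : ℝ) / ((Nat.factorial (l - k) : ℝ) * lam ^ k)

open Finset

theorem Nat.pow_mul_sub_choose_two_le_mul_descFactorial {R : Type*} [CommRing R] [LinearOrder R]
    [IsStrictOrderedRing R] (n : ℕ) {k : ℕ} (hk : k ≤ n) :
    (n : R) ^ k * (n - k.choose 2) ≤ n * n.descFactorial k := by
  induction k with
  | zero => simp
  | succ k ih =>
    have ih := ih (by omega)
    have hnk : (0 : R) ≤ n - k := sub_nonneg.2 (by exact_mod_cast (by omega : k ≤ n))
    rw [Nat.descFactorial_succ, Nat.choose_succ_succ', Nat.choose_one_right]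
    push_cast [Nat.cast_sub (by omega : k ≤ n)]
    have expand : (n : R) ^ (k + 1) * (n - (k + k.choose 2))
        = (n - k) * (n ^ k * (n - k.choose 2)) - k * k.choose 2 * n ^ k := by ring
    have : (0 : R) ≤ k * k.choose 2 * n ^ k := by positivity
    rw [expand]
    linarith [mul_le_mul_of_nonneg_left ih hnk]

theorem sum_range_choose_mul_pow_le {r : ℝ} (hr₀ : 0 ≤ r) (hr₁ : r < 1) (j n : ℕ) :
    ∑ k ∈ range n, (k.choose j : ℝ) * r ^ k ≤ r ^ j / (1 - r) ^ (j + 1) := by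
  have hr : ‖r‖ < 1 := by rwa [Real.norm_of_nonneg hr₀]
  calc ∑ k ∈ range n, (k.choose j : ℝ) * r ^ k
      ≤ ∑ k ∈ range (j + n), (k.choose j : ℝ) * r ^ k :=
        sum_le_sum_of_subset_of_nonneg (range_mono (by omega)) fun _ _ _ => by positivity
    _ = r ^ j * ∑ k ∈ range n, ((k + j).choose j : ℝ) * r ^ k := by
        rw [sum_range_add, mul_sum]
        have : ∀ k ∈ range j, (k.choose j : ℝ) * r ^ k = 0 := fun k hk => by
          rw [Nat.choose_eq_zero_of_lt (mem_range.1 hk), Nat.cast_zero, zero_mul]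
        rw [sum_eq_zero this, zero_add]
        refine sum_congr rfl fun k _ => ?_
        rw [add_comm j k, pow_add]; ring
    _ ≤ r ^ j * ∑' k, ((k + j).choose j : ℝ) * r ^ k := by
        gcongr
        exact (summable_choose_mul_geometric_of_norm_lt_one j hr).sum_le_tsum _
          fun _ _ => by positivity
    _ = r ^ j / (1 - r) ^ (j + 1) := by
        rw [tsum_choose_mul_geometric_of_norm_lt_one j hr, mul_one_div]

theorem natCast_mul_pow_le_two_of_le_mul_one_sub_sq {r : ℝ} (hr₀ : 0 ≤ r) (hr₁ : r < 1) {l : ℕ}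
    (h : r ≤ l * (1 - r) ^ 2) : l * r ^ l ≤ 2 := by
  have gauss : (∑ k ∈ range (l + 1), (k : ℝ)) = l * (l + 1) / 2 := by
    have gauss_nat := sum_range_id_mul_two (l + 1)
    rw [Nat.add_sub_cancel, Nat.mul_comm (l + 1)] at gauss_nat
    rw [eq_div_iff two_ne_zero, ← Nat.cast_sum]
    exact_mod_cast gauss_nat
  have hsum : (l * (l + 1) / 2 : ℝ) * r ^ l ≤ r / (1 - r) ^ 2 := by
    calc (l * (l + 1) / 2 : ℝ) * r ^ l = ∑ k ∈ range (l + 1), (k : ℝ) * r ^ l := by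
          rw [← sum_mul, gauss]
      _ ≤ ∑ k ∈ range (l + 1), (k.choose 1 : ℝ) * r ^ k := by
          refine sum_le_sum fun k hk => ?_
          rw [Nat.choose_one_right]
          exact mul_le_mul_of_nonneg_left
            (pow_le_pow_of_le_one hr₀ hr₁.le (Nat.lt_succ_iff.1 (mem_range.1 hk))) k.cast_nonneg
      _ ≤ r / (1 - r) ^ 2 := by simpa using sum_range_choose_mul_pow_le hr₀ hr₁ 1 (l + 1)
  have hpos : 0 < (1 - r) ^ 2 := by nlinarith
  rw [le_div_iff₀ hpos] at hsum
  nlinarith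

theorem D_eq_sum_descFactorial (lam : ℝ) (l : ℕ) :
    D lam l = ∑ k ∈ range (l + 1), (l.descFactorial k : ℝ) / lam ^ k := by
  refine sum_congr rfl fun k hk => ?_
  rw [← Nat.factorial_mul_descFactorial (Nat.lt_succ_iff.1 (mem_range.1 hk)), Nat.cast_mul,
    mul_div_mul_left _ _ (Nat.cast_ne_zero.2 (Nat.factorial_ne_zero _))]

theorem geom_sum_sub_le_D {lam : ℝ} (hlam : 0 < lam) {l : ℕ} (hl : (l : ℝ) < lam) :
    (1 - (l / lam) ^ (l + 1)) / (1 - l / lam) - 1 / (lam * (1 - l / lam) ^ 3) ≤ D lam l := by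
  rcases Nat.eq_zero_or_pos l with rfl | hl₀
  · simp [D]
    positivity
  set r : ℝ := l / lam with hr
  have hr₀ : 0 ≤ r := by positivity
  have hr₁ : r < 1 := (div_lt_one hlam).2 hl
  have hl₀' : (0 : ℝ) < l := by exact_mod_cast hl₀
  have term : ∀ k ∈ range (l + 1),
      r ^ k - (k.choose 2 : ℝ) * r ^ k / l ≤ (l.descFactorial k : ℝ) / lam ^ k := by
    intro k hk
    have key := Nat.pow_mul_sub_choose_two_le_mul_descFactorial (R := ℝ) l
      (Nat.lt_succ_iff.1 (mem_range.1 hk))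
    calc r ^ k - (k.choose 2 : ℝ) * r ^ k / l
        = (l : ℝ) ^ k * (l - k.choose 2) / (l * lam ^ k) := by
          rw [hr, div_pow]; field_simp
      _ ≤ l * l.descFactorial k / (l * lam ^ k) := by gcongr
      _ = (l.descFactorial k : ℝ) / lam ^ k := mul_div_mul_left _ _ hl₀'.ne'
  have geom : ∑ k ∈ range (l + 1), r ^ k = (1 - r ^ (l + 1)) / (1 - r) := by
    rw [eq_div_iff (by linarith), geom_sum_mul_neg]
  have error :
      (∑ k ∈ range (l + 1), (k.choose 2 : ℝ) * r ^ k) / l ≤ 1 / (lam * (1 - r) ^ 3) := by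
    have h1r : 0 < 1 - r := by linarith
    calc (∑ k ∈ range (l + 1), (k.choose 2 : ℝ) * r ^ k) / l ≤ r ^ 2 / (1 - r) ^ 3 / l := by
          gcongr
          exact sum_range_choose_mul_pow_le hr₀ hr₁ 2 (l + 1)
      _ = l / lam * (1 / (lam * (1 - r) ^ 3)) := by rw [hr]; field_simp
      _ ≤ 1 / (lam * (1 - r) ^ 3) := mul_le_of_le_one_left (by positivity) hr₁.le
  calc (1 - r ^ (l + 1)) / (1 - r) - 1 / (lam * (1 - r) ^ 3)
      ≤ ∑ k ∈ range (l + 1), (r ^ k - (k.choose 2 : ℝ) * r ^ k / l) := by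
        rw [sum_sub_distrib, ← sum_div, geom]
        linarith
    _ ≤ D lam l := by
        rw [D_eq_sum_descFactorial]
        exact sum_le_sum term

theorem div_pow_succ_le_two_div {lam : ℝ} (hlam : 0 < lam) {l : ℕ}
    (hl : (l : ℝ) ≤ lam - √lam) : (l / lam) ^ (l + 1) ≤ 2 / lam := by
  have hgap : lam ≤ (lam - l) ^ 2 := by
    nlinarith [Real.sq_sqrt hlam.le, Real.sqrt_nonneg lam]
  have hr₁ : (l : ℝ) / lam < 1 := (div_lt_one hlam).2 (by linarith [Real.sqrt_pos.2 hlam])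
  have hr : (l : ℝ) / lam ≤ l * (1 - l / lam) ^ 2 := by
    rw [one_sub_div hlam.ne', div_pow, mul_div_assoc', div_le_div_iff₀ hlam (by positivity)]
    nlinarith [mul_le_mul_of_nonneg_left hgap (mul_nonneg l.cast_nonneg hlam.le)]
  calc (l / lam) ^ (l + 1) = l * (l / lam) ^ l / lam := by rw [pow_succ]; ring
    _ ≤ 2 / lam := by
        gcongr
        exact natCast_mul_pow_le_two_of_le_mul_one_sub_sq (by positivity) hr₁ hr

/-- There are constants `C > 0`, `λ₀ > 0` such that for all `λ ≥ λ₀` and all naturals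
`l ≤ λ − √λ`, `D_λ(l) ≥ (1 − C/λ)/(1 − l/λ) − (1 + C/λ)/(λ(1 − l/λ)³)`. -/
theorem D_lower_bound_body :
    ∃ C > (0 : ℝ), ∃ lam₀ > (0 : ℝ), ∀ lam : ℝ, lam₀ ≤ lam → ∀ l : ℕ,
      (l : ℝ) ≤ lam - Real.sqrt lam →
      D lam l ≥ (1 - C / lam) / (1 - (l : ℝ) / lam)
          - (1 + C / lam) / (lam * (1 - (l : ℝ) / lam) ^ 3) := by
  refine ⟨2, two_pos, 1, one_pos, fun lam hlam l hl => ?_⟩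
  have hlam₀ : 0 < lam := by linarith
  have hlt : (l : ℝ) < lam := by linarith [Real.sqrt_pos.2 hlam₀]
  have hgap : 0 < 1 - l / lam := sub_pos.2 ((div_lt_one hlam₀).2 hlt)
  refine le_trans (sub_le_sub ?_ ?_) (geom_sum_sub_le_D hlam₀ hlt)
  · gcongr
    exact div_pow_succ_le_two_div hlam₀ hl
  · gcongr
    exact le_add_of_nonneg_right (by positivity)
end

section
/- There exists a constant λ₀ > 0 such that for all real λ ≥ λ₀ and all natural numbers l with l ≥ λ − √λ, one has D_λ(l) ≥ l!·e^λ/(e⁷·λ^l). -/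
open Real Finset
open scoped Nat

theorem factorial_le_exp_one_mul_sqrt_mul_pow {n : ℕ} (hn : n ≠ 0) :
    (n ! : ℝ) ≤ exp 1 * √n * (n / exp 1) ^ n := by
  obtain ⟨k, rfl⟩ := Nat.exists_eq_add_one_of_ne_zero hn
  have h : Stirling.stirlingSeq (k + 1) ≤ Stirling.stirlingSeq 1 :=
    Stirling.stirlingSeq'_antitone (Nat.zero_le k)
  rw [Stirling.stirlingSeq_one, Stirling.stirlingSeq] at h
  rw [div_le_div_iff₀ (by positivity) (by positivity), sqrt_mul zero_le_two] at h
  have : 0 < √2 := by positivity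
  nlinarith

theorem exp_two_sub_div_le {x lam : ℝ} (hx : 0 < x) (hlam : 0 < lam) :
    exp (2 - x / lam) ≤ lam * exp 1 / x := by
  rw [le_div_iff₀ hx]
  calc exp (2 - x / lam) * x = lam * exp 2 * (x / lam * exp (-(x / lam))) := by
        rw [sub_eq_add_neg, exp_add]; field_simp
    _ ≤ lam * exp 2 * exp (-1) := by gcongr; exact mul_exp_neg_le_exp_neg_one _
    _ = lam * exp 1 := by rw [mul_assoc, ← exp_add]; norm_num

theorem exp_sub_sq_div_le_pow {lam : ℝ} (hlam : 0 < lam) {n : ℕ} (hn : n ≠ 0) :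
    exp (lam - (lam - n) ^ 2 / lam) ≤ (lam * exp 1 / n) ^ n := by
  have hn' : (0 : ℝ) < n := by positivity
  calc exp (lam - (lam - n) ^ 2 / lam) = exp (2 - n / lam) ^ n := by
        rw [← exp_nat_mul]; congr 1; field_simp; ring
    _ ≤ (lam * exp 1 / n) ^ n := pow_le_pow_left₀ (exp_pos _).le (exp_two_sub_div_le hn' hlam) n

theorem exp_sub_sq_div_sub_one_le_sqrt_mul_pow_div_factorial {lam : ℝ} (hlam : 0 < lam) {n : ℕ} (hn : n ≠ 0) :
    exp (lam - (lam - n) ^ 2 / lam - 1) ≤ √n * (lam ^ n / n !) := by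
  have hn' : (0 : ℝ) < n := by positivity
  calc exp (lam - (lam - n) ^ 2 / lam - 1) ≤ (lam * exp 1 / n) ^ n / exp 1 := by
        rw [exp_sub]; gcongr; exact exp_sub_sq_div_le_pow hlam hn
    _ = √n * (lam ^ n / (exp 1 * √n * (n / exp 1) ^ n)) := by
        field_simp
        rw [← mul_pow]; congr 1; field_simp
    _ ≤ √n * (lam ^ n / n !) := by
        gcongr; exact factorial_le_exp_one_mul_sqrt_mul_pow hn

theorem pow_div_factorial_le_pow_div_factorial {lam : ℝ} {n j : ℕ} (hnj : n ≤ j)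
    (hj : (j : ℝ) ≤ lam) : lam ^ n / n ! ≤ lam ^ j / j ! := by
  induction j, hnj using Nat.le_induction with
  | base => rfl
  | succ j hnj ih =>
    push_cast at hj
    have hlam : 0 ≤ lam := by linarith [j.cast_nonneg (α := ℝ)]
    have hj1 : 1 ≤ lam / (j + 1) := by rw [le_div_iff₀ (by positivity)]; linarith
    calc lam ^ n / n ! ≤ lam ^ j / j ! := ih (by linarith)
      _ ≤ lam ^ j / j ! * (lam / (j + 1)) :=
          le_mul_of_one_le_right (by positivity) hj1
      _ = lam ^ (j + 1) / (j + 1)! := by push_cast [Nat.factorial_succ]; field_simp; ring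

noncomputable def expPartialSum (x : ℝ) (l : ℕ) : ℝ := ∑ j ∈ range (l + 1), x ^ j / j !

theorem D_eq_mul_expPartialSum {lam : ℝ} (hlam : lam ≠ 0) (l : ℕ) :
    D lam l = l ! / lam ^ l * expPartialSum lam l := by
  rw [D, expPartialSum, mul_sum, ← sum_range_reflect]
  refine sum_congr rfl fun k hk => ?_
  have hkl : k ≤ l := Nat.lt_succ_iff.mp (mem_range.mp hk)
  rw [show l + 1 - 1 - k = l - k by omega, Nat.sub_sub_self hkl, ← pow_sub_mul_pow lam hkl]
  field_simp

theorem card_mul_pow_div_factorial_le_expPartialSum {lam : ℝ} {n j l : ℕ}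
    (hjl : j ≤ l) (hj : (j : ℝ) ≤ lam) :
    ((j + 1 - n : ℕ) : ℝ) * (lam ^ n / n !) ≤ expPartialSum lam l := by
  have hlam : 0 ≤ lam := le_trans j.cast_nonneg hj
  calc ((j + 1 - n : ℕ) : ℝ) * (lam ^ n / n !) = (Icc n j).card • (lam ^ n / n !) := by
        rw [Nat.card_Icc, nsmul_eq_mul]
    _ ≤ ∑ i ∈ Icc n j, lam ^ i / i ! := card_nsmul_le_sum _ _ _ fun i hi =>
        pow_div_factorial_le_pow_div_factorial (mem_Icc.mp hi).1
          (le_trans (by exact_mod_cast (mem_Icc.mp hi).2) hj)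
    _ ≤ expPartialSum lam l := sum_le_sum_of_subset_of_nonneg
        (fun i hi => mem_range.mpr (by have := (mem_Icc.mp hi).2; omega))
        fun i _ _ => by positivity

theorem exists_window_of_sub_sqrt_le {lam : ℝ} (hlam : 100 ≤ lam) {l : ℕ} (hl : lam - √lam ≤ l) :
    ∃ n j : ℕ, n ≠ 0 ∧ n ≤ j ∧ j ≤ l ∧ (j : ℝ) ≤ lam ∧ (lam - n) ^ 2 ≤ 6 * lam ∧
      √lam ≤ ((j + 1 - n : ℕ) : ℝ) := by
  set s := √lam
  have hs2 : s ^ 2 = lam := sq_sqrt (by linarith)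
  have hs : 10 ≤ s := by
    rw [show (10 : ℝ) = √(10 ^ 2) by simp]; exact sqrt_le_sqrt (by linarith)
  set m := ⌊s⌋₊
  set j := min l ⌊lam⌋₊
  have hms : (m : ℝ) ≤ s := Nat.floor_le (by linarith)
  have hsm : s < m + 1 := Nat.lt_floor_add_one s
  have hjlam : (j : ℝ) ≤ lam := by
    simp only [j, Nat.cast_min]
    exact (min_le_right _ _).trans (Nat.floor_le (by linarith))
  have hj : lam - s - 1 < j := by
    simp only [j, Nat.cast_min]
    exact lt_min (by linarith) (by linarith [Nat.lt_floor_add_one lam])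
  have hmj : m < j := by exact_mod_cast (show (m : ℝ) < j by nlinarith)
  refine ⟨j - m, j, ?_, Nat.sub_le j m, min_le_left _ _, hjlam, ?_, ?_⟩
  · exact Nat.sub_ne_zero_of_lt hmj
  · have hd : (0 : ℝ) ≤ lam - ↑(j - m) := by
      push_cast [Nat.cast_sub hmj.le]; linarith [m.cast_nonneg (α := ℝ)]
    have hd' : lam - ↑(j - m) ≤ 2 * s + 1 := by push_cast [Nat.cast_sub hmj.le]; linarith
    nlinarith
  · rw [show j + 1 - (j - m) = m + 1 by omega]; push_cast; linarith

/-- There is a constant `λ₀ > 0` such that for all `λ ≥ λ₀` and all naturals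
`l ≥ λ − √λ`, `D_λ(l) ≥ l!·e^λ/(e⁷·λ^l)`. -/
theorem D_lower_bound_tail :
    ∃ lam₀ > (0 : ℝ), ∀ lam : ℝ, lam₀ ≤ lam → ∀ l : ℕ,
      lam - Real.sqrt lam ≤ (l : ℝ) →
      D lam l ≥ (Nat.factorial l : ℝ) * Real.exp lam / (Real.exp 7 * lam ^ l) := by
  refine ⟨100, by norm_num, fun lam hlam l hl => ?_⟩
  have hlam0 : 0 < lam := by linarith
  obtain ⟨n, j, hn, hnj, hjl, hjlam, hsq, hcard⟩ := exists_window_of_sub_sqrt_le hlam hl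
  have hsum : exp (lam - 7) ≤ expPartialSum lam l :=
    calc exp (lam - 7) ≤ exp (lam - (lam - n) ^ 2 / lam - 1) :=
          exp_le_exp.mpr (by linarith [(div_le_iff₀ hlam0).mpr hsq])
      _ ≤ √n * (lam ^ n / n !) := exp_sub_sq_div_sub_one_le_sqrt_mul_pow_div_factorial hlam0 hn
      _ ≤ ((j + 1 - n : ℕ) : ℝ) * (lam ^ n / n !) := by
          gcongr
          exact (Real.sqrt_le_sqrt ((Nat.cast_le.mpr hnj).trans hjlam)).trans hcard
      _ ≤ expPartialSum lam l := card_mul_pow_div_factorial_le_expPartialSum hjl hjlam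
  rw [D_eq_mul_expPartialSum hlam0.ne', ge_iff_le,
    show (l ! : ℝ) * exp lam / (exp 7 * lam ^ l) = l ! / lam ^ l * exp (lam - 7) by
      rw [exp_sub]; field_simp]
  gcongr
end

section
/- For every natural number n there exist constants C > 0 and λ₀ > 0 such that for all real λ ≥ λ₀, the tail sum satisfies ∑_{l > λ−√λ} l^n/D_λ(l) ≤ C·λ^n, where the (convergent) sum runs over all natural numbers l with l > λ − √λ. -/
open Finset
open scoped Nat

theorem one_add_pow_le_exp_mul {t : ℝ} (ht : -1 ≤ t) (w : ℕ) :
    (1 + t) ^ w ≤ Real.exp (w * t) := by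
  rw [Real.exp_nat_mul]
  exact pow_le_pow_left₀ (by linarith) (by linarith [Real.add_one_le_exp t]) w

theorem tsum_pow_mul_geometric_le (n : ℕ) {r : ℝ} (hr0 : 0 ≤ r) (hr1 : r < 1) :
    ∑' j : ℕ, (j : ℝ) ^ n * r ^ j ≤ n ! / (1 - r) ^ (n + 1) := by
  have hr : ‖r‖ < 1 := by rwa [Real.norm_of_nonneg hr0]
  -- `j ^ n ≤ (j + 1) ⋯ (j + n) = n! * (j + n).choose n`
  have hpow (j : ℕ) : (j : ℝ) ^ n ≤ n ! * (j + n).choose n := by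
    rw [← Nat.cast_mul, ← Nat.ascFactorial_eq_factorial_mul_choose]
    exact_mod_cast (Nat.pow_le_pow_left j.le_succ n).trans (Nat.pow_succ_le_ascFactorial _ n)
  calc ∑' j : ℕ, (j : ℝ) ^ n * r ^ j ≤ ∑' j : ℕ, n ! * ((j + n).choose n * r ^ j) := by
        refine (summable_pow_mul_geometric_of_norm_lt_one n hr).tsum_le_tsum (fun j => ?_)
          ((summable_choose_mul_geometric_of_norm_lt_one n hr).mul_left _)
        rw [← mul_assoc]; gcongr; exact hpow j
    _ = n ! / (1 - r) ^ (n + 1) := by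
        rw [tsum_mul_left, tsum_choose_mul_geometric_of_norm_lt_one n hr, mul_one_div]

section ShiftedGeometric

variable {n : ℕ} {a r : ℝ}

theorem add_pow_mul_geometric_le (ha : 0 ≤ a) (hr : 0 ≤ r) (j : ℕ) :
    (a + j) ^ n * r ^ j ≤ 2 ^ n * (a ^ n * r ^ j + (j : ℝ) ^ n * r ^ j) := by
  calc (a + j) ^ n * r ^ j ≤ 2 ^ (n - 1) * (a ^ n + (j : ℝ) ^ n) * r ^ j := by
        gcongr; exact add_pow_le ha j.cast_nonneg n
    _ ≤ 2 ^ n * (a ^ n + (j : ℝ) ^ n) * r ^ j := by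
        gcongr; exacts [one_le_two, n.sub_le 1]
    _ = _ := by ring

theorem summable_add_pow_mul_geometric (ha : 0 ≤ a) (hr0 : 0 ≤ r) (hr1 : r < 1) :
    Summable fun j : ℕ => (a + j) ^ n * r ^ j := by
  have hr : ‖r‖ < 1 := by rwa [Real.norm_of_nonneg hr0]
  exact .of_nonneg_of_le (fun j => by positivity) (add_pow_mul_geometric_le ha hr0)
    ((((summable_geometric_of_lt_one hr0 hr1).mul_left _).add
      (summable_pow_mul_geometric_of_norm_lt_one n hr)).mul_left _)

theorem tsum_add_pow_mul_geometric_le {b : ℝ} (ha : 0 ≤ a) (hab : a ≤ b) (hr0 : 0 ≤ r)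
    (hr1 : r < 1) (hrb : (1 - r)⁻¹ ≤ b) :
    ∑' j : ℕ, (a + j) ^ n * r ^ j ≤ 2 ^ n * (1 + n !) * b ^ n * (1 - r)⁻¹ := by
  have hr : ‖r‖ < 1 := by rwa [Real.norm_of_nonneg hr0]
  have hgeo := summable_geometric_of_lt_one hr0 hr1
  have hpow := summable_pow_mul_geometric_of_norm_lt_one n hr
  have hx : 0 < (1 - r)⁻¹ := by rw [inv_pos]; linarith
  calc ∑' j : ℕ, (a + j) ^ n * r ^ j
      ≤ ∑' j : ℕ, 2 ^ n * (a ^ n * r ^ j + (j : ℝ) ^ n * r ^ j) :=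
        (summable_add_pow_mul_geometric ha hr0 hr1).tsum_le_tsum (add_pow_mul_geometric_le ha hr0)
          ((hgeo.mul_left _).add hpow |>.mul_left _)
    _ = 2 ^ n * (a ^ n * (1 - r)⁻¹ + ∑' j : ℕ, (j : ℝ) ^ n * r ^ j) := by
        rw [tsum_mul_left, (hgeo.mul_left _).tsum_add hpow, tsum_mul_left,
          tsum_geometric_of_lt_one hr0 hr1]
    _ ≤ 2 ^ n * (b ^ n * (1 - r)⁻¹ + n ! * ((1 - r)⁻¹ ^ n * (1 - r)⁻¹)) := by
        gcongr
        calc ∑' j : ℕ, (j : ℝ) ^ n * r ^ j ≤ n ! / (1 - r) ^ (n + 1) :=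
              tsum_pow_mul_geometric_le n hr0 hr1
          _ = n ! * ((1 - r)⁻¹ ^ n * (1 - r)⁻¹) := by rw [← pow_succ, inv_pow, div_eq_mul_inv]
    _ ≤ 2 ^ n * (b ^ n * (1 - r)⁻¹ + n ! * (b ^ n * (1 - r)⁻¹)) := by gcongr
    _ = 2 ^ n * (1 + n !) * b ^ n * (1 - r)⁻¹ := by ring

end ShiftedGeometric

theorem tsum_le_tsum_of_shift {f g : ℕ → ℝ} {k : ℕ} (hf0 : ∀ l, 0 ≤ f l)
    (hfk : ∀ l < k, f l = 0) (hfg : ∀ j, f (k + j) ≤ g j) (hg : Summable g) :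
    ∑' l, f l ≤ ∑' j, g j := by
  have hsupp : Function.support f ⊆ Set.range (k + ·) := fun l hl =>
    ⟨l - k, Nat.add_sub_cancel' (not_lt.mp fun h => hl (hfk l h))⟩
  rw [← (add_right_injective k).tsum_eq hsupp]
  exact Summable.tsum_le_tsum hfg (.of_nonneg_of_le (fun j => hf0 _) hfg hg) hg

theorem D_succ {lam : ℝ} (hlam : lam ≠ 0) (l : ℕ) :
    D lam (l + 1) = 1 + (l + 1) / lam * D lam l := by
  rw [D, sum_range_succ', D, mul_sum, add_comm]
  congr 1
  · simp [Nat.factorial_ne_zero]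
  · refine sum_congr rfl fun k _ => ?_
    rw [show l + 1 - (k + 1) = l - k by omega, Nat.factorial_succ, pow_succ]
    push_cast
    field_simp

theorem one_le_D {lam : ℝ} (hlam : 0 < lam) : ∀ l, 1 ≤ D lam l
  | 0 => by simp [D]
  | l + 1 => by
    have := one_le_D hlam l
    have : 0 ≤ (l + 1) / lam * D lam l := by positivity
    rw [D_succ hlam.ne']
    linarith

theorem geom_sum_add_pow_mul_D_le {lam q : ℝ} (hlam : 0 < lam) (hq : 0 ≤ q) {l k : ℕ}
    (h : ∀ i < k, q * lam ≤ l + i + 1) :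
    ∑ i ∈ range k, q ^ i + q ^ k * D lam l ≤ D lam (l + k) := by
  induction k with
  | zero => simp
  | succ k ih =>
    have hq' : q ≤ (↑(l + k) + 1) / lam := by
      rw [le_div_iff₀ hlam]; push_cast; linarith [h k (by omega)]
    have hD : 1 ≤ D lam l := one_le_D hlam l
    rw [← add_assoc, D_succ hlam.ne', geom_sum_succ, pow_succ']
    calc q * ∑ i ∈ range k, q ^ i + 1 + q * q ^ k * D lam l
        = 1 + q * (∑ i ∈ range k, q ^ i + q ^ k * D lam l) := by ring
      _ ≤ 1 + (↑(l + k) + 1) / lam * D lam (l + k) := by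
        gcongr
        exact ih fun i hi => h i (by omega)

theorem sqrt_div_sixteen_le_D {lam : ℝ} (hlam : 64 ≤ lam) {l : ℕ} (hl : lam - √lam ≤ l) :
    √lam / 16 ≤ D lam l := by
  set s := √lam
  have hs : 8 ≤ s := Real.le_sqrt_of_sq_le (by linarith)
  have hss : s * s = lam := Real.mul_self_sqrt (by linarith)
  have h2s : 2 / s ≤ 1 / 4 := by rw [div_le_iff₀ (by positivity)]; linarith
  set k := ⌊s / 4⌋₊
  have hk : (k : ℝ) ≤ s / 4 := Nat.floor_le (by positivity)
  have hk' : s / 4 < k + 1 := Nat.lt_floor_add_one _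
  have hkl : k ≤ l := by exact_mod_cast hk.trans (by nlinarith : s / 4 ≤ (l : ℝ))
  have hD := geom_sum_add_pow_mul_D_le (lam := lam) (q := 1 - 2 / s) (by linarith) (by linarith)
    (l := l - k) (k := k) fun i _ => by
      have : (1 - 2 / s) * lam = lam - 2 * s := by field_simp; linarith
      rw [Nat.cast_sub hkl, this]; linarith
  rw [Nat.sub_add_cancel hkl] at hD
  have hterm : ∀ i ∈ range k, 1 / 2 ≤ (1 - 2 / s) ^ i := by
    intro i hi
    have hi : (i : ℝ) * (2 / s) ≤ 1 / 2 := by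
      have : (i : ℝ) ≤ k := by exact_mod_cast (mem_range.mp hi).le
      calc (i : ℝ) * (2 / s) ≤ s / 4 * (2 / s) := by gcongr; linarith
        _ = 1 / 2 := by field_simp; ring
    calc (1 : ℝ) / 2 ≤ 1 + i * (-(2 / s)) := by linarith
      _ ≤ (1 + -(2 / s)) ^ i := one_add_mul_le_pow (by linarith) i
      _ = (1 - 2 / s) ^ i := by ring
  have hsum := card_nsmul_le_sum _ _ _ hterm
  rw [card_range, nsmul_eq_mul] at hsum
  have : 0 ≤ (1 - 2 / s) ^ k * D lam (l - k) :=
    mul_nonneg (pow_nonneg (by linarith) _) (zero_le_one.trans (one_le_D (by linarith) _))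
  linarith

theorem sqrt_div_sixteen_mul_pow_le_pow_mul_D {lam : ℝ} (hlam : 64 ≤ lam) {l w : ℕ}
    (hl : lam - √lam ≤ l) (hw : lam + √lam ≤ l + w) (j : ℕ) :
    √lam / 16 * (1 + 1 / √lam) ^ j ≤ (1 + 1 / √lam) ^ w * D lam (l + j) := by
  set s := √lam
  have hs : 0 < s := Real.sqrt_pos.mpr (by linarith)
  have hss : s * s = lam := Real.mul_self_sqrt (by linarith)
  have hρ : 1 ≤ 1 + 1 / s := by simp [hs.le]
  rcases le_or_gt j w with hjw | hwj
  · calc s / 16 * (1 + 1 / s) ^ j ≤ (1 + 1 / s) ^ w * (s / 16) := by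
          rw [mul_comm]; gcongr
      _ ≤ (1 + 1 / s) ^ w * D lam (l + j) := by
          gcongr; exact sqrt_div_sixteen_le_D hlam (by push_cast; linarith)
  · obtain ⟨m, rfl⟩ := Nat.exists_eq_add_of_le hwj.le
    have hgrow := geom_sum_add_pow_mul_D_le (lam := lam) (q := 1 + 1 / s) (by linarith)
      (by positivity) (l := l + w) (k := m) fun i _ => by
        have : (1 + 1 / s) * lam = lam + s := by field_simp; linear_combination -hss
        rw [this]; push_cast; linarith
    have hsum : 0 ≤ ∑ i ∈ range m, (1 + 1 / s) ^ i := by positivity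
    have hwin : s / 16 ≤ D lam (l + w) := sqrt_div_sixteen_le_D hlam (by push_cast; linarith)
    rw [← add_assoc]
    calc s / 16 * (1 + 1 / s) ^ (w + m) = (1 + 1 / s) ^ w * ((1 + 1 / s) ^ m * (s / 16)) := by
          ring
      _ ≤ (1 + 1 / s) ^ w * D lam (l + w + m) := by
          have := mul_le_mul_of_nonneg_left hwin (pow_nonneg (zero_le_one.trans hρ) m)
          gcongr; linarith

theorem pow_div_D_le {lam : ℝ} (hlam : 64 ≤ lam) {l w : ℕ} (hl : lam - √lam ≤ l)
    (hw : lam + √lam ≤ l + w) (n j : ℕ) :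
    ((l + j : ℕ) : ℝ) ^ n / D lam (l + j) ≤
      16 * (1 + 1 / √lam) ^ w / √lam * ((l + j) ^ n * (1 + 1 / √lam)⁻¹ ^ j) := by
  have hs : 0 < √lam := Real.sqrt_pos.mpr (by linarith)
  have hD := sqrt_div_sixteen_mul_pow_le_pow_mul_D hlam hl hw j
  have hD0 : 0 < D lam (l + j) := zero_lt_one.trans_le (one_le_D (by linarith) _)
  set ρ := 1 + 1 / √lam
  have hρ : 0 < ρ := by positivity
  rw [div_le_iff₀ hD0, Nat.cast_add]
  calc ((l : ℝ) + j) ^ n = (l + j) ^ n * ρ⁻¹ ^ j * (16 / √lam) * (√lam / 16 * ρ ^ j) := by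
        rw [inv_pow]; field_simp
    _ ≤ (l + j) ^ n * ρ⁻¹ ^ j * (16 / √lam) * (ρ ^ w * D lam (l + j)) := by gcongr
    _ = _ := by ring

theorem tsum_ite_pow_div_D_le {lam : ℝ} (hlam : 64 ≤ lam) {w : ℕ} (hw : 2 * √lam ≤ w) (n : ℕ) :
    (∑' l : ℕ, if lam - √lam < l then (l : ℝ) ^ n / D lam l else 0) ≤
      16 * 2 ^ n * (1 + n !) * (1 + 1 / √lam) ^ (w + 1) * lam ^ n := by
  set s := √lam
  have hs : 8 ≤ s := Real.le_sqrt_of_sq_le (by linarith)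
  have hss : s * s = lam := Real.mul_self_sqrt (by linarith)
  set l₁ := ⌈lam - s⌉₊
  have hl₁ : lam - s ≤ l₁ := Nat.le_ceil _
  have hl₁' : (l₁ : ℝ) < lam - s + 1 := Nat.ceil_lt_add_one (by nlinarith)
  set r := (1 + 1 / s)⁻¹
  have hr : r = s / (s + 1) := by simp only [r]; field_simp
  have hr0 : 0 ≤ r := by positivity
  have hr1 : r < 1 := by rw [hr, div_lt_one (by linarith)]; linarith
  have h1r : (1 - r)⁻¹ = s + 1 := by rw [hr]; field_simp; ring
  calc (∑' l : ℕ, if lam - s < l then (l : ℝ) ^ n / D lam l else 0)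
      ≤ ∑' j : ℕ, 16 * (1 + 1 / s) ^ w / s * ((l₁ + j) ^ n * r ^ j) := by
        refine tsum_le_tsum_of_shift (k := l₁) (fun l => ?_) (fun l hl => if_neg ?_) (fun j => ?_)
          ((summable_add_pow_mul_geometric (Nat.cast_nonneg _) hr0 hr1).mul_left _)
        · have := one_le_D (by linarith : 0 < lam) l
          split_ifs <;> positivity
        · exact fun h => hl.not_ge (Nat.ceil_le.mpr h.le)
        · split_ifs
          · exact pow_div_D_le hlam hl₁ (by linarith) n j
          · positivity
    _ = 16 * (1 + 1 / s) ^ w / s * ∑' j : ℕ, (l₁ + j) ^ n * r ^ j := tsum_mul_left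
    _ ≤ 16 * (1 + 1 / s) ^ w / s * (2 ^ n * (1 + n !) * lam ^ n * (s + 1)) := by
        rw [← h1r]
        gcongr
        exact tsum_add_pow_mul_geometric_le (by positivity) (by linarith) hr0 hr1
          (by rw [h1r]; nlinarith)
    _ = 16 * 2 ^ n * (1 + n !) * (1 + 1 / s) ^ (w + 1) * lam ^ n := by
        rw [pow_succ, one_add_div (by positivity)]; field_simp

/-- For every natural `n` there are constants `C > 0`, `λ₀ > 0` such that for all
`λ ≥ λ₀`, the tail sum over naturals `l > λ − √λ` satisfies
`∑_{l > λ−√λ} l^n/D_λ(l) ≤ C·λ^n`. -/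
theorem tail_sum_bound (n : ℕ) :
    ∃ C > (0 : ℝ), ∃ lam₀ > (0 : ℝ), ∀ lam : ℝ, lam₀ ≤ lam →
      (∑' l : ℕ, if lam - Real.sqrt lam < (l : ℝ) then (l : ℝ) ^ n / D lam l else 0)
        ≤ C * lam ^ n := by
  refine ⟨16 * 2 ^ n * (1 + n !) * Real.exp 3, by positivity, 64, by norm_num,
    fun lam hlam => ?_⟩
  have hs : 8 ≤ √lam := Real.le_sqrt_of_sq_le (by linarith)
  set w := ⌈2 * √lam⌉₊
  have hw : (w : ℝ) < 2 * √lam + 1 := Nat.ceil_lt_add_one (by linarith)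
  have hexp : (1 + 1 / √lam) ^ (w + 1) ≤ Real.exp 3 := by
    have : 0 ≤ 1 / √lam := by positivity
    refine (one_add_pow_le_exp_mul (by linarith) _).trans (Real.exp_le_exp.mpr ?_)
    rw [← div_eq_mul_one_div, div_le_iff₀ (by positivity)]
    push_cast; linarith
  calc _ ≤ 16 * 2 ^ n * (1 + n !) * (1 + 1 / √lam) ^ (w + 1) * lam ^ n :=
        tsum_ite_pow_div_D_le hlam (Nat.le_ceil _) n
    _ ≤ 16 * 2 ^ n * (1 + n !) * Real.exp 3 * lam ^ n := by gcongr
end
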